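/- arXiv:0906.0154 — 4 statements merged into one kernel-verified Lean document; each statement's English description precedes it below -/
import Mathlib

section
/- Let Σ be a connected (X,2)-arc-transitive graph of valency v ≥ 3 and let Δ be a self-paired X-orbit on Arc₃(Σ) with ℓ₁(Δ) = 1. If X acts faithfully on V(Σ), then for every vertex τ of Σ the stabilizer X_τ acts faithfully on the neighbourhood Σ(τ). -/
open Pointwise

/-- A 2-arc `(t.1, t.2.1, t.2.2)` of a simple graph. -/
def IsArc2 {V : Type*} (G : SimpleGraph V) (t : V × V × V) : Prop :=
  G.Adj t.1 t.2.1 ∧ G.Adj t.2.1 t.2.2 ∧ t.1 ≠ t.2.2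

/-- A 3-arc `(t.1, t.2.1, t.2.2.1, t.2.2.2)` of a simple graph. -/
def IsArc3 {V : Type*} (G : SimpleGraph V) (t : V × V × V × V) : Prop :=
  G.Adj t.1 t.2.1 ∧ G.Adj t.2.1 t.2.2.1 ∧ G.Adj t.2.2.1 t.2.2.2 ∧
    t.1 ≠ t.2.2.1 ∧ t.2.1 ≠ t.2.2.2

/-- The reverse of a 3-arc. -/
def rev3 {V : Type*} (t : V × V × V × V) : V × V × V × V :=
  (t.2.2.2, t.2.2.1, t.2.1, t.1)

/-- `G` is regular of valency `d`. -/
def Regular {V : Type*} (G : SimpleGraph V) (d : ℕ) : Prop :=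
  ∀ u : V, (G.neighborSet u).ncard = d

/-- The action of `X` preserves the adjacency of `G`. -/
def AdjPres (X : Type*) {V : Type*} [Group X] [MulAction X V] (G : SimpleGraph V) : Prop :=
  ∀ (x : X) (u w : V), G.Adj u w → G.Adj (x • u) (x • w)

/-- `X` is transitive on the vertices. -/
def VertexTrans (X V : Type*) [Group X] [MulAction X V] : Prop :=
  ∀ u w : V, ∃ x : X, x • u = w

/-- `X` is transitive on the arcs of `G`. -/
def ArcTrans (X : Type*) {V : Type*} [Group X] [MulAction X V] (G : SimpleGraph V) : Prop :=
  ∀ a b : V × V, G.Adj a.1 a.2 → G.Adj b.1 b.2 → ∃ x : X, x • a = b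

/-- `G` is `X`-symmetric. -/
def XSymm (X : Type*) {V : Type*} [Group X] [MulAction X V] (G : SimpleGraph V) : Prop :=
  AdjPres X G ∧ VertexTrans X V ∧ ArcTrans X G

/-- `X` is transitive on the 2-arcs of `G`. -/
def Arc2Trans (X : Type*) {V : Type*} [Group X] [MulAction X V] (G : SimpleGraph V) : Prop :=
  ∀ s t : V × V × V, IsArc2 G s → IsArc2 G t → ∃ x : X, x • s = t

/-- `X` is transitive on the 3-arcs of `G`. -/
def Arc3Trans (X : Type*) {V : Type*} [Group X] [MulAction X V] (G : SimpleGraph V) : Prop :=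
  ∀ s t : V × V × V × V, IsArc3 G s → IsArc3 G t → ∃ x : X, x • s = t

/-- `G` is `(X,2)`-arc-transitive. -/
def Arc2TransGraph (X : Type*) {V : Type*} [Group X] [MulAction X V] (G : SimpleGraph V) : Prop :=
  XSymm X G ∧ Arc2Trans X G

/-- `X` is regular on the 2-arcs of `G`, i.e. `G` is `(X,2)`-arc-regular
(together with `X`-symmetry). -/
def Arc2Reg (X : Type*) {V : Type*} [Group X] [MulAction X V] (G : SimpleGraph V) : Prop :=
  XSymm X G ∧ ∀ s t : V × V × V, IsArc2 G s → IsArc2 G t → ∃! x : X, x • s = t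

/-- `Δ` is a self-paired `X`-orbit on the set of 3-arcs of `G`. -/
def SelfPairedOrbit3 (X : Type*) {V : Type*} [Group X] [MulAction X V] (G : SimpleGraph V)
    (Δ : Set (V × V × V × V)) : Prop :=
  (∀ t ∈ Δ, IsArc3 G t) ∧ (∃ t₀ ∈ Δ, Δ = MulAction.orbit X t₀) ∧ ∀ t ∈ Δ, rev3 t ∈ Δ

/-- `ℓ₁(Δ) = k`:  for each `(τ₁,τ,σ,σ₁) ∈ Δ`, the orbit of `σ₁` under the pointwise
stabilizer of `(τ₁,τ,σ)` in `X` has exactly `k` elements. -/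
def Ell1Eq (X : Type*) {V : Type*} [Group X] [MulAction X V]
    (Δ : Set (V × V × V × V)) (k : ℕ) : Prop :=
  ∀ t ∈ Δ, ({u : V | ∃ x : X, x • t.1 = t.1 ∧ x • t.2.1 = t.2.1 ∧
    x • t.2.2.1 = t.2.2.1 ∧ x • t.2.2.2 = u}).ncard = k

/-!
Call `x` *locally trivial* at `σ` if it fixes `σ` and all its neighbours. This spreads to every
neighbour `σ'` of `σ`: a neighbour `w ≠ σ` of `σ'` gives a 2-arc `(w, σ', σ)`, which by
2-arc-transitivity extends to some `(w, σ', σ, u) ∈ Δ`. Its reverse `(u, σ, σ', w)` also lies in `Δ`,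
and `x` fixes `u, σ, σ'`; since `ℓ₁(Δ) = 1`, it fixes `w` as well. By connectedness `x` then
fixes every vertex, so `x = 1` by faithfulness.
-/

theorem SimpleGraph.Reachable.of_adj_step {V : Type*} {G : SimpleGraph V} {P : V → Prop}
    (hstep : ∀ a b, G.Adj a b → P a → P b) {a b : V} (h : G.Reachable a b) (ha : P a) : P b := by
  rw [SimpleGraph.reachable_iff_reflTransGen] at h
  induction h with
  | refl => exact ha
  | tail _ hadj ih => exact hstep _ _ hadj ih

section

variable {X V : Type*} [Group X] [MulAction X V] {G : SimpleGraph V} {Δ : Set (V × V × V × V)}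

theorem Ell1Eq.smul_eq_of_fixes (hℓ : Ell1Eq X Δ 1) {t : V × V × V × V} (ht : t ∈ Δ) {x : X}
    (h₁ : x • t.1 = t.1) (h₂ : x • t.2.1 = t.2.1) (h₃ : x • t.2.2.1 = t.2.2.1) :
    x • t.2.2.2 = t.2.2.2 := by
  obtain ⟨a, ha⟩ := Set.ncard_eq_one.mp (hℓ t ht)
  have hx : x • t.2.2.2 ∈ ({a} : Set V) := ha ▸ ⟨x, h₁, h₂, h₃, rfl⟩
  have h1 : t.2.2.2 ∈ ({a} : Set V) :=
    ha ▸ ⟨1, one_smul _ _, one_smul _ _, one_smul _ _, one_smul _ _⟩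
  exact hx.trans h1.symm

theorem SelfPairedOrbit3.exists_mem_of_isArc2 (hΔ : SelfPairedOrbit3 X G Δ)
    (h2 : Arc2Trans X G) {a b c : V} (habc : IsArc2 G (a, b, c)) : ∃ u, (a, b, c, u) ∈ Δ := by
  obtain ⟨hΔ3, ⟨t, ht, rfl⟩, -⟩ := hΔ
  obtain ⟨h₁, h₂, -, h₃, -⟩ := hΔ3 t ht
  obtain ⟨g, hg⟩ := h2 (t.1, t.2.1, t.2.2.1) (a, b, c) ⟨h₁, h₂, h₃⟩ habc
  have hgt : g • t = (a, b, c, g • t.2.2.2) := by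
    simp only [Prod.smul_mk, Prod.mk.injEq] at hg
    obtain ⟨rfl, rfl, rfl⟩ := hg
    rfl
  exact ⟨g • t.2.2.2, hgt ▸ MulAction.mem_orbit t g⟩

def LocallyTrivialAt (G : SimpleGraph V) (x : X) (σ : V) : Prop :=
  x • σ = σ ∧ ∀ w, G.Adj σ w → x • w = w

theorem LocallyTrivialAt.of_adj (hΔ : SelfPairedOrbit3 X G Δ) (h2 : Arc2Trans X G)
    (hℓ : Ell1Eq X Δ 1) {x : X} {σ σ' : V} (hx : LocallyTrivialAt G x σ) (hadj : G.Adj σ σ') :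
    LocallyTrivialAt G x σ' := by
  obtain ⟨hσ, hnbr⟩ := hx
  have hσ' := hnbr σ' hadj
  refine ⟨hσ', fun w hw => ?_⟩
  rcases eq_or_ne w σ with rfl | hwσ
  · exact hσ
  obtain ⟨u, hu⟩ := hΔ.exists_mem_of_isArc2 h2 ⟨hw.symm, hadj.symm, hwσ⟩
  have hσu : G.Adj σ u := (hΔ.1 _ hu).2.2.1
  exact hℓ.smul_eq_of_fixes (hΔ.2.2 _ hu) (hnbr u hσu) hσ hσ'

end

theorem stabilizer_faithful_on_neighborhood_general {V X : Type*} [Group X] [MulAction X V]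
    (G : SimpleGraph V)
    (hconn : G.Connected) (h2at : Arc2TransGraph X G)
    (Δ : Set (V × V × V × V)) (hΔ : SelfPairedOrbit3 X G Δ) (hℓ : Ell1Eq X Δ 1)
    (hfaith : ∀ x : X, (∀ u : V, x • u = u) → x = 1) :
    ∀ (τ : V) (x : X), x • τ = τ → (∀ σ : V, G.Adj τ σ → x • σ = σ) → x = 1 := by
  intro τ x hτ hnbr
  have htriv (u : V) : LocallyTrivialAt G x u :=
    (hconn.preconnected τ u).of_adj_step (fun _ _ hadj h => h.of_adj hΔ h2at.2 hℓ hadj) ⟨hτ, hnbr⟩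
  exact hfaith x fun u => (htriv u).1

/-- Let `G` be a connected `(X,2)`-arc-transitive graph of valency `v ≥ 3`
and `Δ` a self-paired `X`-orbit on the 3-arcs of `G` with `ℓ₁(Δ) = 1`.  If `X` acts
faithfully on the vertices, then every vertex stabilizer acts faithfully on the
corresponding neighbourhood. -/
theorem stabilizer_faithful_on_neighborhood {V X : Type*} [Fintype V] [Group X] [MulAction X V]
    (G : SimpleGraph V) (v : ℕ) (hv : 3 ≤ v) (hreg : Regular G v)
    (hconn : G.Connected) (h2at : Arc2TransGraph X G)
    (Δ : Set (V × V × V × V)) (hΔ : SelfPairedOrbit3 X G Δ) (hℓ : Ell1Eq X Δ 1)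
    (hfaith : ∀ x : X, (∀ u : V, x • u = u) → x = 1) :
    ∀ (τ : V) (x : X), x • τ = τ → (∀ σ : V, G.Adj τ σ → x • σ = σ) → x = 1 :=
  stabilizer_faithful_on_neighborhood_general G hconn h2at Δ hΔ hℓ hfaith
end

section
/- Let Σ be a connected (X,2)-arc-transitive graph of valency v ≥ 3 with X acting faithfully on V(Σ), and let Δ be a self-paired X-orbit on Arc₃(Σ) with ℓ₁(Δ) = 1. Then there exist an integer n ≥ girth(Σ) and an X-orbit E of n-cycles of Σ such that every 2-path of Σ is contained in a unique member of E, and either Σ is isomorphic to the complete graph K_{v+1} on v+1 vertices, or girth(Σ) ≥ 4 and Σ is a near n-gonal graph with respect to E. -/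
/-!
Because `Δ` is a single `X`-orbit and `ℓ₁(Δ) = 1`, the first three vertices of a 3-arc in `Δ`
determine the fourth. Pick `(a₀, a₁, a₂, a₃) ∈ Δ` and, by 2-arc-transitivity, `g ∈ X` mapping
`(a₀, a₁, a₂)` to `(a₁, a₂, a₃)`; the `⟨g⟩`-orbit of `a₀` is then an `n`-cycle all of whose
consecutive 3-arcs lie in `Δ`. Such a `Δ`-cycle is determined by three consecutive vertices, and
since `Δ` is self-paired it may be traversed in either direction, so the `X`-orbit `E` of this
cycle has exactly one member through each 2-arc. Finally, if `G` has a triangle then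
2-arc-transitivity closes up every 2-arc, so the connected graph `G` is complete; otherwise its
girth is at least 4.
-/

open Pointwise

/-- The arc set of the cycle traced by `c : ZMod n → V`. -/
def cycleArcSet {V : Type*} (n : ℕ) (c : ZMod n → V) : Set (V × V) :=
  {p | ∃ i : ZMod n, p = (c i, c (i + 1)) ∨ p = (c (i + 1), c i)}

/-- `S` is (the arc set of) an `n`-cycle of `G`. -/
def IsNCycleSet {V : Type*} (G : SimpleGraph V) (n : ℕ) (S : Set (V × V)) : Prop :=
  ∃ c : ZMod n → V, Function.Injective c ∧ (∀ i, G.Adj (c i) (c (i + 1))) ∧ S = cycleArcSet n c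

/-- The vertex set of a cycle given by its arc set. -/
def cycVerts {V : Type*} (S : Set (V × V)) : Set V := {u | ∃ w, (u, w) ∈ S}

/-- The 3-arcs of a cycle given by its arc set. -/
def cycArc3 {V : Type*} (S : Set (V × V)) : Set (V × V × V × V) :=
  {t | (t.1, t.2.1) ∈ S ∧ (t.2.1, t.2.2.1) ∈ S ∧ (t.2.2.1, t.2.2.2) ∈ S ∧
    t.1 ≠ t.2.2.1 ∧ t.2.1 ≠ t.2.2.2}

/-- The disjoint union `mC_n` of `m` cycles of length `n`. -/
def mCycles (m n : ℕ) : SimpleGraph (Fin m × ZMod n) :=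
  SimpleGraph.fromRel (fun p q => p.1 = q.1 ∧ q.2 = p.2 + 1)

/-- `E` is an `X`-orbit (on sets of arcs, e.g. on `n`-cycles). -/
def XOrbitOfArcSets (X : Type*) {V : Type*} [Group X] [MulAction X V]
    (E : Set (Set (V × V))) : Prop :=
  ∃ S₀ ∈ E, E = MulAction.orbit X S₀

/-- The permutation group induced on the vertex set of a cycle (with arc set `S`) by the
setwise stabilizer in `X` of the cycle. -/
def inducedCyclePerms (X : Type*) {V : Type*} [Group X] [MulAction X V] (S : Set (V × V)) :
    Subgroup (Equiv.Perm ↥(cycVerts S)) where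
  carrier := {e | ∃ x : X, x • S = S ∧ ∀ u : ↥(cycVerts S), (e u : V) = x • (u : V)}
  one_mem' := ⟨1, one_smul _ _, fun u => by simp⟩
  mul_mem' := by
    rintro e f ⟨x, hxS, hx⟩ ⟨y, hyS, hy⟩
    refine ⟨x * y, by rw [mul_smul, hyS, hxS], fun u => ?_⟩
    rw [Equiv.Perm.mul_apply, hx, hy, mul_smul]
  inv_mem' := by
    rintro e ⟨x, hxS, hx⟩
    refine ⟨x⁻¹, inv_smul_eq_iff.mpr hxS.symm, fun u => ?_⟩
    have h := hx (e⁻¹ u)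
    rw [show e (e⁻¹ u) = u from e.apply_symm_apply u] at h
    rw [eq_inv_smul_iff]
    exact h.symm

/-- `G` is a near `n`-gonal graph with respect to the set `E` of `n`-cycles. -/
def NearNGonal {V : Type*} (G : SimpleGraph V) (n : ℕ) (E : Set (Set (V × V))) : Prop :=
  G.Connected ∧ 4 ≤ G.girth ∧ (∀ S ∈ E, IsNCycleSet G n S) ∧
    ∀ t : V × V × V, IsArc2 G t →
      ∃! S : Set (V × V), S ∈ E ∧ (t.1, t.2.1) ∈ S ∧ (t.2.1, t.2.2) ∈ S

open MulAction Function

section Cycles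

variable {V : Type*} {n : ℕ}

lemma cycleArcSet_comp_add_right (f : ZMod n → V) (j : ZMod n) :
    cycleArcSet n (fun i => f (i + j)) = cycleArcSet n f := by
  ext p
  constructor
  · rintro ⟨i, h⟩
    dsimp only at h
    exact ⟨i + j, by rwa [add_right_comm] at h⟩
  · rintro ⟨i, h⟩
    exact ⟨i - j, by dsimp only; rwa [add_right_comm _ 1 j, sub_add_cancel]⟩

lemma cycleArcSet_comp_neg (f : ZMod n → V) :
    cycleArcSet n (fun i => f (-i)) = cycleArcSet n f := by
  have h (i : ZMod n) : -(i + 1) + 1 = -i := by ring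
  ext p
  constructor
  · rintro ⟨i, hp⟩
    exact ⟨-(i + 1), by rwa [h, Or.comm]⟩
  · rintro ⟨i, hp⟩
    exact ⟨-(i + 1), by dsimp only; rwa [h, neg_neg, neg_neg, Or.comm]⟩

def IsDeltaCycle (Δ : Set (V × V × V × V)) (f : ZMod n → V) : Prop :=
  ∀ i, (f i, f (i + 1), f (i + 2), f (i + 3)) ∈ Δ

variable {Δ : Set (V × V × V × V)} {f f₁ f₂ : ZMod n → V}

lemma IsDeltaCycle.comp_add_right (hf : IsDeltaCycle Δ f) (j : ZMod n) :
    IsDeltaCycle Δ (fun i => f (i + j)) := by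
  intro i
  simpa only [add_right_comm _ j] using hf (i + j)

lemma IsDeltaCycle.comp_neg (hΔ : ∀ t ∈ Δ, rev3 t ∈ Δ) (hf : IsDeltaCycle Δ f) :
    IsDeltaCycle Δ (fun i => f (-i)) := by
  intro i
  convert hΔ _ (hf (-i - 3)) using 2 <;> simp only [rev3] <;> ring_nf

lemma IsDeltaCycle.ext [NeZero n]
    (hΔ : ∀ ⦃a b c d d'⦄, (a, b, c, d) ∈ Δ → (a, b, c, d') ∈ Δ → d = d')
    (hf₁ : IsDeltaCycle Δ f₁) (hf₂ : IsDeltaCycle Δ f₂)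
    (h₀ : f₁ 0 = f₂ 0) (h₁ : f₁ 1 = f₂ 1) (h₂ : f₁ 2 = f₂ 2) : f₁ = f₂ := by
  have key (k : ℕ) : f₁ k = f₂ k ∧ f₁ (k + 1) = f₂ (k + 1) ∧ f₁ (k + 2) = f₂ (k + 2) := by
    induction k with
    | zero => simpa using ⟨h₀, h₁, h₂⟩
    | succ k ih =>
      obtain ⟨e₀, e₁, e₂⟩ := ih
      have e₃ : f₁ (k + 3) = f₂ (k + 3) := by
        refine hΔ ?_ (hf₂ k)
        rw [← e₀, ← e₁, ← e₂]
        exact hf₁ k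
      push_cast
      rw [add_assoc, add_assoc, one_add_one_eq_two, show (1 : ZMod n) + 2 = 3 by norm_num]
      exact ⟨e₁, e₂, e₃⟩
  funext i
  simpa using (key i.val).1

lemma IsDeltaCycle.exists_reindex (hΔ : ∀ t ∈ Δ, rev3 t ∈ Δ) (hf : IsDeltaCycle Δ f)
    (hinj : Injective f) {a b d : V} (hab : (a, b) ∈ cycleArcSet n f)
    (hbd : (b, d) ∈ cycleArcSet n f) (had : a ≠ d) :
    ∃ f' : ZMod n → V, IsDeltaCycle Δ f' ∧ cycleArcSet n f' = cycleArcSet n f ∧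
      f' 0 = a ∧ f' 1 = b ∧ f' 2 = d := by
  obtain ⟨i, h | h⟩ := hab <;> obtain ⟨j, h' | h'⟩ := hbd <;>
    simp only [Prod.mk.injEq] at h h' <;> obtain ⟨rfl, rfl⟩ := h
  · obtain rfl : j = i + 1 := hinj h'.1.symm
    obtain ⟨-, rfl⟩ := h'
    refine ⟨fun k => f (k + i), hf.comp_add_right i, cycleArcSet_comp_add_right f i, ?_, ?_, ?_⟩
    all_goals dsimp only; congr 1; ring
  · obtain rfl : i = j := add_right_cancel (hinj h'.1)
    exact absurd h'.2.symm had
  · obtain rfl : i = j := hinj h'.1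
    exact absurd h'.2.symm had
  · obtain rfl : i = j + 1 := hinj h'.1
    obtain ⟨-, rfl⟩ := h'
    refine ⟨fun k => f (-k + (j + 1 + 1)), (hf.comp_add_right _).comp_neg hΔ,
      (cycleArcSet_comp_neg _).trans (cycleArcSet_comp_add_right f _), ?_, ?_, ?_⟩
    all_goals dsimp only; congr 1; ring

lemma IsDeltaCycle.three_le [NeZero n] {G : SimpleGraph V} (hΔ : ∀ t ∈ Δ, IsArc3 G t)
    (hf : IsDeltaCycle Δ f) : 3 ≤ n := by
  obtain ⟨h01, -, -, h02, -⟩ := hΔ _ (hf 0)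
  have := NeZero.pos n
  by_contra! hn
  interval_cases n
  · exact h01.ne (congrArg f (by decide))
  · exact h02 (congrArg f (by decide))

end Cycles

section GroupAction

variable {X V : Type*} [Group X] [MulAction X V] {G : SimpleGraph V} {Δ : Set (V × V × V × V)}
  {n : ℕ} {c : ZMod n → V}

lemma smul_cycleArcSet (x : X) (f : ZMod n → V) :
    x • cycleArcSet n f = cycleArcSet n (fun i => x • f i) := by
  ext ⟨p, q⟩
  simp [Set.mem_smul_set_iff_inv_smul_mem, cycleArcSet, inv_smul_eq_iff]

lemma IsDeltaCycle.smul (hΔ : ∀ (x : X), ∀ t ∈ Δ, x • t ∈ Δ)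
    (hc : IsDeltaCycle Δ c) (x : X) : IsDeltaCycle Δ (fun i => x • c i) :=
  fun i => hΔ x _ (hc i)

lemma isNCycleSet_of_mem_orbit (hA : AdjPres X G) (hinj : Injective c)
    (hadj : ∀ i, G.Adj (c i) (c (i + 1))) {S : Set (V × V)}
    (hS : S ∈ orbit X (cycleArcSet n c)) : IsNCycleSet G n S := by
  obtain ⟨x, rfl⟩ := hS
  exact ⟨fun i => x • c i, (MulAction.injective x).comp hinj, fun i => hA x _ _ (hadj i),
    smul_cycleArcSet x c⟩

lemma SelfPairedOrbit3.smul_mem (hΔ : SelfPairedOrbit3 X G Δ) (x : X) {t : V × V × V × V}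
    (ht : t ∈ Δ) : x • t ∈ Δ := by
  obtain ⟨t₀, -, rfl⟩ := hΔ.2.1
  exact mem_orbit_of_mem_orbit x ht

lemma SelfPairedOrbit3.eq_of_ell1_eq_one (hΔ : SelfPairedOrbit3 X G Δ) (hℓ : Ell1Eq X Δ 1)
    {a b c d d' : V} (h : (a, b, c, d) ∈ Δ) (h' : (a, b, c, d') ∈ Δ) : d = d' := by
  obtain ⟨t₀, -, rfl⟩ := hΔ.2.1
  obtain ⟨z, hz⟩ : (a, b, c, d') ∈ orbit X (a, b, c, d) := orbit_eq_iff.mpr h ▸ h'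
  simp only [Prod.smul_mk, Prod.mk.injEq] at hz
  obtain ⟨u, hu⟩ := Set.ncard_eq_one.mp (hℓ _ h)
  have hd : d ∈ ({u} : Set V) := hu ▸ ⟨1, by simp⟩
  have hd' : d' ∈ ({u} : Set V) := hu ▸ ⟨z, hz⟩
  exact hd.trans hd'.symm

lemma SelfPairedOrbit3.eq_of_mem_orbit [NeZero n] (hΔ : SelfPairedOrbit3 X G Δ)
    (hℓ : Ell1Eq X Δ 1) (hc : IsDeltaCycle Δ c) (hinj : Injective c) {a b d : V} (had : a ≠ d)
    {S₁ S₂ : Set (V × V)} (hS₁ : S₁ ∈ orbit X (cycleArcSet n c))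
    (hS₂ : S₂ ∈ orbit X (cycleArcSet n c)) (h₁ : (a, b) ∈ S₁ ∧ (b, d) ∈ S₁)
    (h₂ : (a, b) ∈ S₂ ∧ (b, d) ∈ S₂) : S₁ = S₂ := by
  have start : ∀ S ∈ orbit X (cycleArcSet n c), (a, b) ∈ S ∧ (b, d) ∈ S →
      ∃ f, IsDeltaCycle Δ f ∧ cycleArcSet n f = S ∧ f 0 = a ∧ f 1 = b ∧ f 2 = d := by
    rintro _ ⟨x, rfl⟩ ⟨hab, hbd⟩
    dsimp only at hab hbd ⊢
    rw [smul_cycleArcSet] at hab hbd ⊢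
    exact (hc.smul hΔ.smul_mem x).exists_reindex hΔ.2.2 ((MulAction.injective x).comp hinj)
      hab hbd had
  obtain ⟨f₁, hf₁, rfl, ha₁, hb₁, hd₁⟩ := start S₁ hS₁ h₁
  obtain ⟨f₂, hf₂, rfl, ha₂, hb₂, hd₂⟩ := start S₂ hS₂ h₂
  rw [hf₁.ext (fun _ _ _ _ _ => hΔ.eq_of_ell1_eq_one hℓ) hf₂ (ha₁.trans ha₂.symm)
    (hb₁.trans hb₂.symm) (hd₁.trans hd₂.symm)]

lemma SelfPairedOrbit3.existsUnique_mem_orbit [NeZero n] (hΔ : SelfPairedOrbit3 X G Δ)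
    (hℓ : Ell1Eq X Δ 1) (h2T : Arc2Trans X G) (hc : IsDeltaCycle Δ c) (hinj : Injective c)
    {t : V × V × V} (ht : IsArc2 G t) :
    ∃! S, S ∈ orbit X (cycleArcSet n c) ∧ (t.1, t.2.1) ∈ S ∧ (t.2.1, t.2.2) ∈ S := by
  obtain ⟨h01, h12, -, h02, -⟩ := hΔ.1 _ (hc 0)
  obtain ⟨x, rfl⟩ := h2T (c 0, c (0 + 1), c (0 + 2)) t ⟨h01, h12, h02⟩ ht
  have hx : x • cycleArcSet n c ∈ orbit X (cycleArcSet n c) := mem_orbit _ x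
  have h₁ : x • (c 0, c (0 + 1)) ∈ x • cycleArcSet n c := Set.smul_mem_smul_set ⟨0, Or.inl rfl⟩
  have h₂ : x • (c (0 + 1), c (0 + 2)) ∈ x • cycleArcSet n c :=
    Set.smul_mem_smul_set ⟨0 + 1, Or.inl (by rw [add_assoc, one_add_one_eq_two])⟩
  exact ⟨x • cycleArcSet n c, ⟨hx, h₁, h₂⟩,
    fun S hS => hΔ.eq_of_mem_orbit hℓ hc hinj ht.2.2 hS.1 hx hS.2 ⟨h₁, h₂⟩⟩

lemma MulAction.orbitZPowersEquiv_symm_add_one (g : X) (a : V)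
    (k : ZMod (minimalPeriod (g • ·) a)) :
    ((orbitZPowersEquiv g a).symm (k + 1) : V) = g • ((orbitZPowersEquiv g a).symm k : V) := by
  obtain ⟨m, rfl⟩ := ZMod.intCast_surjective k
  rw [← Int.cast_one, ← Int.cast_add, add_comm, orbitZPowersEquiv_symm_apply',
    orbitZPowersEquiv_symm_apply', zpow_one_add, mul_smul]
  rfl

lemma SelfPairedOrbit3.exists_isDeltaCycle [Finite V] (hΔ : SelfPairedOrbit3 X G Δ)
    (h2T : Arc2Trans X G) :
    ∃ (n : ℕ) (_ : NeZero n) (c : ZMod n → V), Injective c ∧ IsDeltaCycle Δ c := by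
  obtain ⟨⟨a₀, a₁, a₂, a₃⟩, ht₀, -⟩ := hΔ.2.1
  obtain ⟨h01, h12, h23, h02, h13⟩ := hΔ.1 _ ht₀
  obtain ⟨g, hg⟩ := h2T (a₀, a₁, a₂) (a₁, a₂, a₃) ⟨h01, h12, h02⟩ ⟨h12, h23, h13⟩
  simp only [Prod.smul_mk, Prod.mk.injEq] at hg
  obtain ⟨rfl, rfl, rfl⟩ := hg
  set c : ZMod (minimalPeriod (g • ·) a₀) → V := fun k => (orbitZPowersEquiv g a₀).symm k
  have hsucc : ∀ k, c (k + 1) = g • c k := orbitZPowersEquiv_symm_add_one g a₀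
  have h0 : c 0 = a₀ := by
    simpa using congrArg Subtype.val (orbitZPowersEquiv_symm_apply' g a₀ 0)
  have hT (k) : (c k, c (k + 1), c (k + 2), c (k + 3)) =
      (c k, g • c k, g • g • c k, g • g • g • c k) := by
    simp only [show (2 : ZMod (minimalPeriod (g • ·) a₀)) = 1 + 1 by norm_num,
      show (3 : ZMod (minimalPeriod (g • ·) a₀)) = 1 + 1 + 1 by norm_num, ← add_assoc, hsucc]
  refine ⟨_, inferInstance, c, Subtype.val_injective.comp (Equiv.injective _), fun k => ?_⟩
  obtain ⟨m, rfl⟩ := ZMod.natCast_zmod_surjective k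
  induction m with
  | zero => rwa [hT, Nat.cast_zero, h0]
  | succ m ih =>
    rw [hT, Nat.cast_succ, hsucc]
    rw [hT] at ih
    exact hΔ.smul_mem g ih

end GroupAction

namespace SimpleGraph

variable {V : Type*} {G : SimpleGraph V}

lemma exists_isCycle_length_eq_of_injective {n : ℕ} (hn : 3 ≤ n) {c : ZMod n → V}
    (hinj : Injective c) (hadj : ∀ i, G.Adj (c i) (c (i + 1))) :
    ∃ (a : V) (p : G.Walk a a), p.IsCycle ∧ p.length = n := by
  obtain ⟨k, rfl⟩ : ∃ k, n = k + 2 := ⟨n - 2, by omega⟩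
  have hcopy : cycleGraph (k + 2) ⊑ G := by
    refine ⟨Hom.toCopy ⟨c, fun {u v} huv => ?_⟩ hinj⟩
    rcases cycleGraph_adj.mp huv with h | h
    · rw [← sub_add_cancel u v, h, add_comm]
      exact (hadj v).symm
    · rw [← sub_add_cancel v u, h, add_comm]
      exact hadj u
  exact (cycleGraph_isContained_iff (by omega)).mp hcopy

lemma eq_top_of_adj_of_adj (hG : G.Preconnected)
    (h : ∀ a b c, G.Adj a b → G.Adj b c → a ≠ c → G.Adj a c) : G = ⊤ := by
  have eq_or_adj (u w : V) (p : G.Walk u w) : u = w ∨ G.Adj u w := by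
    induction p with
    | nil => exact Or.inl rfl
    | @cons a b c hab p ih =>
      rcases ih with rfl | hbc
      · exact Or.inr hab
      · exact or_iff_not_imp_left.mpr (h a b c hab hbc)
  ext u w
  refine ⟨Adj.ne, fun hne => ?_⟩
  obtain ⟨p⟩ := hG u w
  exact (eq_or_adj u w p).resolve_left hne

end SimpleGraph

section Dichotomy

variable {X V : Type*} [Group X] [MulAction X V] {G : SimpleGraph V}

lemma eq_top_of_arc2Trans_of_adj (hG : G.Preconnected) (hA : AdjPres X G)
    (h2T : Arc2Trans X G) {p q r : V} (hpq : G.Adj p q) (hqr : G.Adj q r) (hpr : G.Adj p r) :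
    G = ⊤ :=
  SimpleGraph.eq_top_of_adj_of_adj hG fun a b c hab hbc hac => by
    obtain ⟨x, hx⟩ := h2T (p, q, r) (a, b, c) ⟨hpq, hqr, hpr.ne⟩ ⟨hab, hbc, hac⟩
    simp only [Prod.smul_mk, Prod.mk.injEq] at hx
    exact hx.1 ▸ hx.2.2 ▸ hA x p r hpr

lemma eq_top_or_four_le_girth (hG : G.Preconnected) (hA : AdjPres X G) (h2T : Arc2Trans X G)
    (hcyc : ¬ G.IsAcyclic) : G = ⊤ ∨ 4 ≤ G.girth := by
  refine (SimpleGraph.three_le_girth hcyc).eq_or_lt.imp (fun h3 => ?_) id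
  obtain ⟨a, p, hp, hlen⟩ := SimpleGraph.exists_girth_eq_length.mpr hcyc
  obtain ⟨f⟩ :=
    (SimpleGraph.cycleGraph_isContained_iff (by norm_num)).mpr ⟨a, p, hp, hlen ▸ h3.symm⟩
  rw [SimpleGraph.cycleGraph_three_eq_top] at f
  have hadj (i j : Fin 3) (hij : i ≠ j) : G.Adj (f i) (f j) := f.toHom.map_adj hij
  exact eq_top_of_arc2Trans_of_adj hG hA h2T (hadj 0 1 (by decide)) (hadj 1 2 (by decide))
    (hadj 0 2 (by decide))

end Dichotomy

lemma Regular.nonempty_iso_top {V : Type*} [Fintype V] [Nonempty V] {v : ℕ}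
    (hreg : Regular (⊤ : SimpleGraph V) v) :
    Nonempty ((⊤ : SimpleGraph V) ≃g (⊤ : SimpleGraph (Fin (v + 1)))) := by
  obtain ⟨u⟩ := ‹Nonempty V›
  have hcard : Fintype.card V = v + 1 := by
    have := hreg u
    rw [SimpleGraph.neighborSet_top, Set.ncard_compl, Set.ncard_singleton,
      Nat.card_eq_fintype_card] at this
    have := Fintype.card_pos (α := V)
    omega
  exact ⟨SimpleGraph.Iso.completeGraph (Fintype.equivFinOfCardEq hcard)⟩

theorem nearNGonal_of_ell1_eq_one_general {V X : Type*} [Fintype V] [Group X] [MulAction X V]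
    (G : SimpleGraph V) (v : ℕ) (hreg : Regular G v)
    (hconn : G.Connected) (h2at : Arc2TransGraph X G)
    (Δ : Set (V × V × V × V)) (hΔ : SelfPairedOrbit3 X G Δ) (hℓ : Ell1Eq X Δ 1) :
    ∃ (n : ℕ) (E : Set (Set (V × V))),
      G.girth ≤ n ∧
      (∀ S ∈ E, IsNCycleSet G n S) ∧ XOrbitOfArcSets X E ∧
      (∀ t : V × V × V, IsArc2 G t →
        ∃! S : Set (V × V), S ∈ E ∧ (t.1, t.2.1) ∈ S ∧ (t.2.1, t.2.2) ∈ S) ∧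
      (Nonempty (G ≃g (⊤ : SimpleGraph (Fin (v + 1)))) ∨
        (4 ≤ G.girth ∧ NearNGonal G n E)) := by
  obtain ⟨⟨hA, -, -⟩, h2T⟩ := h2at
  obtain ⟨n, _, c, hinj, hc⟩ := hΔ.exists_isDeltaCycle h2T
  have hadj (i : ZMod n) : G.Adj (c i) (c (i + 1)) := (hΔ.1 _ (hc i)).1
  obtain ⟨a, p, hp, hlen⟩ :=
    SimpleGraph.exists_isCycle_length_eq_of_injective (hc.three_le hΔ.1) hinj hadj
  have hcycles (S) (hS : S ∈ orbit X (cycleArcSet n c)) : IsNCycleSet G n S :=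
    isNCycleSet_of_mem_orbit hA hinj hadj hS
  have huniq (t) (ht : IsArc2 G t) := hΔ.existsUnique_mem_orbit hℓ h2T hc hinj ht
  refine ⟨n, orbit X (cycleArcSet n c), hlen ▸ SimpleGraph.girth_le_length hp, hcycles,
    ⟨_, mem_orbit_self _, rfl⟩, huniq, ?_⟩
  rcases eq_top_or_four_le_girth hconn.preconnected hA h2T (fun h => h p hp) with rfl | h4
  · have := hconn.nonempty
    exact Or.inl hreg.nonempty_iso_top
  · exact Or.inr ⟨h4, hconn, h4, hcycles, huniq⟩

/-- If `G` is a connected `(X,2)`-arc-transitive graph of valency `v ≥ 3`,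
`X` is faithful on the vertices, and `Δ` is a self-paired `X`-orbit on the 3-arcs with
`ℓ₁(Δ) = 1`, then there are an integer `n ≥ girth(G)` and an `X`-orbit `E` of `n`-cycles
of `G` such that every 2-path of `G` lies in a unique member of `E`, and either
`G ≅ K_{v+1}` or `girth(G) ≥ 4` and `G` is a near `n`-gonal graph with respect to `E`. -/
theorem nearNGonal_of_ell1_eq_one {V X : Type*} [Fintype V] [Group X] [MulAction X V]
    (G : SimpleGraph V) (v : ℕ) (hv : 3 ≤ v) (hreg : Regular G v)
    (hconn : G.Connected) (h2at : Arc2TransGraph X G)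
    (hfaith : ∀ x : X, (∀ u : V, x • u = u) → x = 1)
    (Δ : Set (V × V × V × V)) (hΔ : SelfPairedOrbit3 X G Δ) (hℓ : Ell1Eq X Δ 1) :
    ∃ (n : ℕ) (E : Set (Set (V × V))),
      G.girth ≤ n ∧
      (∀ S ∈ E, IsNCycleSet G n S) ∧ XOrbitOfArcSets X E ∧
      (∀ t : V × V × V, IsArc2 G t →
        ∃! S : Set (V × V), S ∈ E ∧ (t.1, t.2.1) ∈ S ∧ (t.2.1, t.2.2) ∈ S) ∧
      (Nonempty (G ≃g (⊤ : SimpleGraph (Fin (v + 1)))) ∨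
        (4 ≤ G.girth ∧ NearNGonal G n E)) :=
  nearNGonal_of_ell1_eq_one_general G v hreg hconn h2at Δ hΔ hℓ
end

section
/- Let Σ be a connected (X,2)-arc-transitive graph of valency 4 and let Δ be a self-paired X-orbit on Arc₃(Σ). Then J(Δ) is a self-paired X-orbit on J(Σ), and ℷ(Σ,Δ) is isomorphic to Ψ(Σ,J(Δ)). -/
open Pointwise

/-- A 2-path of `G`, as an ordered triple with distinct vertices. -/
def Path2 {V : Type*} (G : SimpleGraph V) : Type _ :=
  {p : V × V × V // G.Adj p.1 p.2.1 ∧ G.Adj p.2.1 p.2.2 ∧ p.1 ≠ p.2.2}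

/-- The reverse of a 2-path. -/
def p2rev {V : Type*} (G : SimpleGraph V) (p : Path2 G) : Path2 G :=
  ⟨(p.1.2.2, p.1.2.1, p.1.1), p.2.2.1.symm, p.2.1.symm, p.2.2.2.symm⟩

/-- 2-paths of `G` up to reversal. -/
def P2 {V : Type*} (G : SimpleGraph V) : Type _ :=
  Quot (fun p q : Path2 G => q = p2rev G p)

/-- The 2-path (mod reversal) determined by an ordered 2-path. -/
def P2.mk {V : Type*} (G : SimpleGraph V) (p : Path2 G) : P2 G := Quot.mk _ p

/-- The graph `ℷ(G,Δ)` on the 2-paths of `G`:  `[α₀,α₁,α₂]` is adjacent to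
`[α₁,α₂,α₃]` whenever `(α₀,α₁,α₂,α₃) ∈ Δ`. -/
def gimel {V : Type*} (G : SimpleGraph V) (Δ : Set (V × V × V × V)) : SimpleGraph (P2 G) :=
  SimpleGraph.fromRel (fun z w => ∃ p q : Path2 G,
    z = P2.mk G p ∧ w = P2.mk G q ∧ p.1.2.1 = q.1.1 ∧ p.1.2.2 = q.1.2.1 ∧
    (p.1.1, p.1.2.1, p.1.2.2, q.1.2.2) ∈ Δ)

/-- The block `P_τ` of all 2-paths of `G` with middle vertex `τ`. -/
def PBlock {V : Type*} (G : SimpleGraph V) (τ : V) : Set (P2 G) :=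
  {z | ∃ p : Path2 G, z = P2.mk G p ∧ p.1.2.1 = τ}

/-- `x ∈ X` maps the 2-path `z` to the 2-path `w` (under the induced action of `X`
on 2-paths mod reversal). -/
def P2Maps (X : Type*) {V : Type*} [Group X] [MulAction X V] (G : SimpleGraph V)
    (x : X) (z w : P2 G) : Prop :=
  ∃ p q : Path2 G, z = P2.mk G p ∧ w = P2.mk G q ∧
    (q.1 = x • p.1 ∨ q.1 = x • (p2rev G p).1)

/-- `J(G)`: the set of pairs `([τ',τ,τ''],[σ',σ,σ''])` of 2-paths of `G` such that
`σ ∈ G(τ) ∖ {τ',τ''}` and `τ ∈ G(σ) ∖ {σ',σ''}`. -/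
def JSet {V : Type*} (G : SimpleGraph V) : Set (P2 G × P2 G) :=
  {pq | ∃ p q : Path2 G, pq.1 = P2.mk G p ∧ pq.2 = P2.mk G q ∧
    G.Adj p.1.2.1 q.1.2.1 ∧ q.1.2.1 ≠ p.1.1 ∧ q.1.2.1 ≠ p.1.2.2 ∧
    p.1.2.1 ≠ q.1.1 ∧ p.1.2.1 ≠ q.1.2.2}

/-- `J(Δ)` for a set of 3-arcs `Δ` of a tetravalent graph `G`:  for a 3-arc
`(τ₁,τ,σ,σ₁) ∈ Δ` we take the pair `([τ₂,τ,τ₃],[σ₂,σ,σ₃])`, where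
`G(τ) = {σ,τ₁,τ₂,τ₃}` and `G(σ) = {τ,σ₁,σ₂,σ₃}`. -/
def JOfArc3 {V : Type*} (G : SimpleGraph V) (Δ : Set (V × V × V × V)) :
    Set (P2 G × P2 G) :=
  {pq | ∃ t ∈ Δ, ∃ p q : Path2 G, pq = (P2.mk G p, P2.mk G q) ∧
    p.1.2.1 = t.2.1 ∧ q.1.2.1 = t.2.2.1 ∧
    ({p.1.1, p.1.2.2} : Set V) = G.neighborSet t.2.1 \ {t.1, t.2.2.1} ∧
    ({q.1.1, q.1.2.2} : Set V) = G.neighborSet t.2.2.1 \ {t.2.1, t.2.2.2}}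

/-- The graph `Ψ(G,Λ)` on the 2-paths of `G`, two 2-paths being adjacent iff the pair
they form lies in `Λ`. -/
def Psi {V : Type*} (G : SimpleGraph V) (Λ : Set (P2 G × P2 G)) : SimpleGraph (P2 G) :=
  SimpleGraph.fromRel (fun z w => (z, w) ∈ Λ)

/-- `Λ` is a self-paired `X`-orbit on `J(G)`. -/
def JSelfPairedOrbit (X : Type*) {V : Type*} [Group X] [MulAction X V] (G : SimpleGraph V)
    (Λ : Set (P2 G × P2 G)) : Prop :=
  Λ ⊆ JSet G ∧ (∀ pq ∈ Λ, (pq.2, pq.1) ∈ Λ) ∧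
  ∃ pq₀ ∈ Λ, ∀ pq : P2 G × P2 G,
    pq ∈ Λ ↔ ∃ x : X, P2Maps X G x pq₀.1 pq.1 ∧ P2Maps X G x pq₀.2 pq.2

/-!
A 2-path `[a, v, b]` is determined by its middle vertex `v` and its pair of endpoints
`{a, b} ⊆ Σ(v)`. In a tetravalent graph, replacing `{a, b}` by its complement in `Σ(v)` is an
involution of the 2-paths, and it sends the edge `{[α₀,α₁,α₂], [α₁,α₂,α₃]}` of `ℷ(Σ,Δ)` given by
`α ∈ Δ` exactly to the pair `J_α`; hence it is an isomorphism `ℷ(Σ,Δ) ≅ Ψ(Σ,J(Δ))`.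
Since `X` preserves adjacency, `J_{x • α} = x • J_α`, so `J(Δ)` is the `X`-orbit of `J_{α₀}`
when `Δ` is the orbit of `α₀`; and `J_{rev α}` is `J_α` with its coordinates swapped.
-/

def SimpleGraph.Iso.fromRel {α β : Type*} {r : α → α → Prop} {s : β → β → Prop}
    (e : α ≃ β) (h : ∀ a b, s (e a) (e b) ↔ r a b) :
    SimpleGraph.fromRel r ≃g SimpleGraph.fromRel s :=
  ⟨e, by simp [h, e.injective.ne_iff]⟩

namespace P2

variable {V : Type*} {G : SimpleGraph V}

def mid : P2 G → V :=
  Quot.lift (fun p => p.1.2.1) (by rintro p q rfl; rfl)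

def ends : P2 G → Set V :=
  Quot.lift (fun p => {p.1.1, p.1.2.2}) (by rintro p q rfl; exact Set.pair_comm _ _)

@[simp] theorem mid_mk (p : Path2 G) : (P2.mk G p).mid = p.1.2.1 := rfl

@[simp] theorem ends_mk (p : Path2 G) : (P2.mk G p).ends = {p.1.1, p.1.2.2} := rfl

theorem mk_surjective : Function.Surjective (P2.mk G) := Quot.exists_rep

theorem ext {z w : P2 G} (hmid : z.mid = w.mid) (hends : z.ends = w.ends) : z = w := by
  obtain ⟨p, rfl⟩ := mk_surjective z
  obtain ⟨q, rfl⟩ := mk_surjective w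
  obtain ⟨⟨p₀, p₁, p₂⟩, hp⟩ := p
  obtain ⟨⟨q₀, q₁, q₂⟩, hq⟩ := q
  change p₁ = q₁ at hmid
  change ({p₀, p₂} : Set V) = {q₀, q₂} at hends
  subst hmid
  rcases Set.pair_eq_pair_iff.mp hends with ⟨rfl, rfl⟩ | ⟨rfl, rfl⟩
  · rfl
  · exact Quot.sound (Subtype.ext rfl)

theorem ends_subset_neighborSet (z : P2 G) : z.ends ⊆ G.neighborSet z.mid := by
  obtain ⟨p, rfl⟩ := mk_surjective z
  rintro u (rfl | rfl)
  exacts [p.2.1.symm, p.2.2.1]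

theorem ncard_ends (z : P2 G) : z.ends.ncard = 2 := by
  obtain ⟨p, rfl⟩ := mk_surjective z
  exact Set.ncard_pair p.2.2.2

theorem exists_mid_ends_eq {v : V} {s : Set V} (hs : s ⊆ G.neighborSet v) (h2 : s.ncard = 2) :
    ∃ z : P2 G, z.mid = v ∧ z.ends = s := by
  obtain ⟨a, b, hab, rfl⟩ := Set.ncard_eq_two.mp h2
  exact ⟨P2.mk G ⟨(a, v, b), (hs (by simp)).symm, hs (by simp), hab⟩, rfl, rfl⟩

theorem exists_compl (hreg : Regular G 4) (z : P2 G) :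
    ∃ w : P2 G, w.mid = z.mid ∧ w.ends = G.neighborSet z.mid \ z.ends := by
  refine exists_mid_ends_eq Set.sdiff_subset ?_
  have hfin : z.ends.Finite := Set.finite_of_ncard_pos (by rw [ncard_ends]; norm_num)
  rw [Set.ncard_sdiff z.ends_subset_neighborSet hfin, hreg, ncard_ends]

noncomputable def compl (hreg : Regular G 4) (z : P2 G) : P2 G :=
  (exists_compl hreg z).choose

variable (hreg : Regular G 4)

@[simp] theorem mid_compl (z : P2 G) : (z.compl hreg).mid = z.mid :=
  (exists_compl hreg z).choose_spec.1

@[simp] theorem ends_compl (z : P2 G) :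
    (z.compl hreg).ends = G.neighborSet z.mid \ z.ends :=
  (exists_compl hreg z).choose_spec.2

theorem compl_involutive : Function.Involutive (compl hreg) := fun z =>
  ext (by simp) (by simp [Set.sdiff_sdiff_cancel_left z.ends_subset_neighborSet])

theorem ends_compl_eq_iff {z : P2 G} {v : V} {s : Set V} (hv : z.mid = v)
    (hs : s ⊆ G.neighborSet v) : (z.compl hreg).ends = G.neighborSet v \ s ↔ z.ends = s := by
  subst hv
  rw [ends_compl]
  refine ⟨fun h => ?_, fun h => h ▸ rfl⟩
  rw [← Set.sdiff_sdiff_cancel_left z.ends_subset_neighborSet, h,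
    Set.sdiff_sdiff_cancel_left hs]

end P2

section Characterizations

variable {V : Type*} {G : SimpleGraph V} {Δ : Set (V × V × V × V)}

theorem gimel_rel_iff (harc : ∀ t ∈ Δ, IsArc3 G t) {z w : P2 G} :
    (∃ p q : Path2 G, z = P2.mk G p ∧ w = P2.mk G q ∧ p.1.2.1 = q.1.1 ∧ p.1.2.2 = q.1.2.1 ∧
      (p.1.1, p.1.2.1, p.1.2.2, q.1.2.2) ∈ Δ) ↔
    ∃ t ∈ Δ, z.mid = t.2.1 ∧ w.mid = t.2.2.1 ∧
      z.ends = {t.1, t.2.2.1} ∧ w.ends = {t.2.1, t.2.2.2} := by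
  constructor
  · rintro ⟨p, q, rfl, rfl, h₁, h₂, ht⟩
    exact ⟨_, ht, rfl, h₂.symm, rfl, by simp [h₁]⟩
  · rintro ⟨t, ht, hzm, hwm, hze, hwe⟩
    obtain ⟨h₀₁, h₁₂, h₂₃, h₀₂, h₁₃⟩ := harc t ht
    exact ⟨⟨(t.1, t.2.1, t.2.2.1), h₀₁, h₁₂, h₀₂⟩, ⟨(t.2.1, t.2.2.1, t.2.2.2), h₁₂, h₂₃, h₁₃⟩,
      P2.ext hzm hze, P2.ext hwm hwe, rfl, rfl, ht⟩

theorem mem_JOfArc3_iff {z w : P2 G} :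
    (z, w) ∈ JOfArc3 G Δ ↔ ∃ t ∈ Δ, z.mid = t.2.1 ∧ w.mid = t.2.2.1 ∧
      z.ends = G.neighborSet t.2.1 \ {t.1, t.2.2.1} ∧
      w.ends = G.neighborSet t.2.2.1 \ {t.2.1, t.2.2.2} := by
  constructor
  · rintro ⟨t, ht, p, q, hpq, h⟩
    obtain ⟨rfl, rfl⟩ := Prod.mk.inj hpq
    exact ⟨t, ht, h⟩
  · rintro ⟨t, ht, h⟩
    obtain ⟨p, rfl⟩ := P2.mk_surjective z
    obtain ⟨q, rfl⟩ := P2.mk_surjective w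
    exact ⟨t, ht, p, q, rfl, h⟩

theorem mem_JSet {z w : P2 G} (hadj : G.Adj z.mid w.mid) (hwz : w.mid ∉ z.ends)
    (hzw : z.mid ∉ w.ends) : (z, w) ∈ JSet G := by
  obtain ⟨p, rfl⟩ := P2.mk_surjective z
  obtain ⟨q, rfl⟩ := P2.mk_surjective w
  simp only [P2.mid_mk, P2.ends_mk, Set.mem_insert_iff, Set.mem_singleton_iff, not_or] at hwz hzw
  exact ⟨p, q, rfl, rfl, hadj, hwz.1, hwz.2, hzw.1, hzw.2⟩

theorem p2Maps_iff (X : Type*) [Group X] [MulAction X V] (x : X) {z w : P2 G} :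
    P2Maps X G x z w ↔ w.mid = x • z.mid ∧ w.ends = x • z.ends := by
  constructor
  · rintro ⟨p, q, rfl, rfl, h | h⟩
    · simp [h, Set.smul_set_insert]
    · simp [h, p2rev, Set.smul_set_insert, Set.pair_comm]
  · rintro ⟨hmid, hends⟩
    obtain ⟨p, rfl⟩ := P2.mk_surjective z
    obtain ⟨q, rfl⟩ := P2.mk_surjective w
    simp only [P2.mid_mk, P2.ends_mk, Set.smul_set_insert, Set.smul_set_singleton] at hmid hends
    refine ⟨p, q, rfl, rfl, ?_⟩
    rcases Set.pair_eq_pair_iff.mp hends with ⟨h₀, h₂⟩ | ⟨h₀, h₂⟩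
    · exact Or.inl (Prod.ext h₀ (Prod.ext hmid h₂))
    · exact Or.inr (Prod.ext h₀ (Prod.ext hmid h₂))

end Characterizations

section Orbits

variable {V : Type*} {G : SimpleGraph V} {Δ : Set (V × V × V × V)}

theorem compl_mem_JOfArc3_iff (hreg : Regular G 4) (harc : ∀ t ∈ Δ, IsArc3 G t)
    {z w : P2 G} :
    (z.compl hreg, w.compl hreg) ∈ JOfArc3 G Δ ↔
      ∃ p q : Path2 G, z = P2.mk G p ∧ w = P2.mk G q ∧ p.1.2.1 = q.1.1 ∧
        p.1.2.2 = q.1.2.1 ∧ (p.1.1, p.1.2.1, p.1.2.2, q.1.2.2) ∈ Δ := by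
  rw [mem_JOfArc3_iff, gimel_rel_iff harc]
  refine exists_congr fun t => and_congr_right fun ht => ?_
  obtain ⟨h₀₁, h₁₂, h₂₃, -, -⟩ := harc t ht
  simp only [P2.mid_compl]
  refine and_congr_right fun hz => and_congr_right fun hw =>
    and_congr (P2.ends_compl_eq_iff hreg hz (Set.pair_subset h₀₁.symm h₁₂))
      (P2.ends_compl_eq_iff hreg hw (Set.pair_subset h₁₂.symm h₂₃))

theorem JOfArc3_subset_JSet (harc : ∀ t ∈ Δ, IsArc3 G t) : JOfArc3 G Δ ⊆ JSet G := by
  rintro ⟨z, w⟩ h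
  obtain ⟨t, ht, hz, hw, hze, hwe⟩ := mem_JOfArc3_iff.mp h
  refine mem_JSet (hz ▸ hw ▸ (harc t ht).2.1) ?_ ?_
  · simp [hze, hw]
  · simp [hwe, hz]

theorem swap_mem_JOfArc3 (hrev : ∀ t ∈ Δ, rev3 t ∈ Δ) :
    ∀ pq ∈ JOfArc3 G Δ, (pq.2, pq.1) ∈ JOfArc3 G Δ := by
  rintro ⟨z, w⟩ h
  obtain ⟨t, ht, hz, hw, hze, hwe⟩ := mem_JOfArc3_iff.mp h
  exact mem_JOfArc3_iff.mpr ⟨rev3 t, hrev t ht, hw, hz, by simpa [rev3, Set.pair_comm] using hwe,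
    by simpa [rev3, Set.pair_comm] using hze⟩

variable {X : Type*} [Group X] [MulAction X V]

theorem smul_neighborSet (hpres : AdjPres X G) (x : X) (v : V) :
    x • G.neighborSet v = G.neighborSet (x • v) := by
  ext u
  refine ⟨?_, fun h => ⟨x⁻¹ • u, by simpa using hpres x⁻¹ _ _ h, smul_inv_smul x u⟩⟩
  rintro ⟨w, hw, rfl⟩
  exact hpres x _ _ hw

theorem exists_JOfArc3_orbit (hreg : Regular G 4) (hpres : AdjPres X G) {t₀ : V × V × V × V}
    (ht₀ : IsArc3 G t₀) (hΔ : Δ = MulAction.orbit X t₀) :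
    ∃ pq₀ ∈ JOfArc3 G Δ, ∀ pq : P2 G × P2 G,
      pq ∈ JOfArc3 G Δ ↔ ∃ x : X, P2Maps X G x pq₀.1 pq.1 ∧ P2Maps X G x pq₀.2 pq.2 := by
  obtain ⟨h₀₁, h₁₂, h₂₃, h₀₂, h₁₃⟩ := ht₀
  obtain ⟨z₀, hz₀ : z₀.mid = t₀.2.1,
      hz₀e : z₀.ends = G.neighborSet t₀.2.1 \ {t₀.1, t₀.2.2.1}⟩ :=
    P2.exists_compl hreg (P2.mk G ⟨(t₀.1, t₀.2.1, t₀.2.2.1), h₀₁, h₁₂, h₀₂⟩)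
  obtain ⟨w₀, hw₀ : w₀.mid = t₀.2.2.1,
      hw₀e : w₀.ends = G.neighborSet t₀.2.2.1 \ {t₀.2.1, t₀.2.2.2}⟩ :=
    P2.exists_compl hreg (P2.mk G ⟨(t₀.2.1, t₀.2.2.1, t₀.2.2.2), h₁₂, h₂₃, h₁₃⟩)
  refine ⟨(z₀, w₀), mem_JOfArc3_iff.mpr ⟨t₀, hΔ ▸ MulAction.mem_orbit_self t₀, hz₀, hw₀, hz₀e, hw₀e⟩,
    fun ⟨z, w⟩ => ?_⟩
  simp only [mem_JOfArc3_iff, hΔ, MulAction.mem_orbit_iff, exists_exists_eq_and, p2Maps_iff,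
    hz₀, hw₀, hz₀e, hw₀e, Set.smul_set_sdiff, smul_neighborSet hpres, Set.smul_set_insert,
    Set.smul_set_singleton, Prod.smul_fst, Prod.smul_snd]
  exact exists_congr fun x => by tauto

end Orbits

theorem gimel_iso_psi_general {V X : Type*} [Group X] [MulAction X V]
    (G : SimpleGraph V) (hreg : Regular G 4)
    (h2at : Arc2TransGraph X G)
    (Δ : Set (V × V × V × V)) (hΔ : SelfPairedOrbit3 X G Δ) :
    JSelfPairedOrbit X G (JOfArc3 G Δ) ∧
      Nonempty (gimel G Δ ≃g Psi G (JOfArc3 G Δ)) := by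
  obtain ⟨⟨hpres, -, -⟩, -⟩ := h2at
  obtain ⟨harc, ⟨t₀, ht₀, horbit⟩, hrev⟩ := hΔ
  exact ⟨⟨JOfArc3_subset_JSet harc, swap_mem_JOfArc3 hrev,
      exists_JOfArc3_orbit hreg hpres (harc t₀ ht₀) horbit⟩,
    ⟨SimpleGraph.Iso.fromRel ((P2.compl_involutive hreg).toPerm _) fun _ _ =>
      compl_mem_JOfArc3_iff hreg harc⟩⟩

/-- For a connected `(X,2)`-arc-transitive graph `G` of valency `4` and a
self-paired `X`-orbit `Δ` on the 3-arcs of `G`, the set `J(Δ)` is a self-paired `X`-orbit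
on `J(G)`, and `ℷ(G,Δ) ≅ Ψ(G,J(Δ))`. -/
theorem gimel_iso_psi {V X : Type*} [Fintype V] [Group X] [MulAction X V]
    (G : SimpleGraph V) (hreg : Regular G 4) (hconn : G.Connected)
    (h2at : Arc2TransGraph X G)
    (Δ : Set (V × V × V × V)) (hΔ : SelfPairedOrbit3 X G Δ) :
    JSelfPairedOrbit X G (JOfArc3 G Δ) ∧
      Nonempty (gimel G Δ ≃g Psi G (JOfArc3 G Δ)) :=
  gimel_iso_psi_general G hreg h2at Δ hΔ
end

section
/- Let Γ be an X-symmetric graph with an X-invariant partition B of V(Γ) such that the quotient graph Γ_B is connected and (X,2)-arc-transitive. Let B ∈ B and let C, D be two distinct neighbours of B in Γ_B. If the bipartite subgraph Γ[B,C] is connected and Γ(C) ∩ B ∩ Γ(D) ≠ ∅, then Γ is connected. -/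
open Pointwise

/-- For a graph `H` whose vertices carry an induced `X`-action described by a relation
`M x z w` (“`x` maps `z` to `w`”), `H` is `X`-symmetric:  `X` preserves adjacency and is
transitive on vertices and on arcs. -/
def RelXSymm (X : Type*) {W : Type*} [Group X] (M : X → W → W → Prop)
    (H : SimpleGraph W) : Prop :=
  (∀ (x : X) (z w z' w' : W), H.Adj z w → M x z z' → M x w w' → H.Adj z' w') ∧
  (∀ z w : W, ∃ x : X, M x z w) ∧
  (∀ z₁ z₂ w₁ w₂ : W, H.Adj z₁ z₂ → H.Adj w₁ w₂ → ∃ x : X, M x z₁ w₁ ∧ M x z₂ w₂)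

/-- `X` is transitive on the 2-arcs of `H`, the action being described by `M`. -/
def RelArc2Trans (X : Type*) {W : Type*} [Group X] (M : X → W → W → Prop)
    (H : SimpleGraph W) : Prop :=
  ∀ z₁ z₂ z₃ w₁ w₂ w₃ : W, H.Adj z₁ z₂ → H.Adj z₂ z₃ → z₁ ≠ z₃ →
    H.Adj w₁ w₂ → H.Adj w₂ w₃ → w₁ ≠ w₃ →
    ∃ x : X, M x z₁ w₁ ∧ M x z₂ w₂ ∧ M x z₃ w₃

/-- `X` is regular on the arcs of `H`, the action being described by `M`. -/
def RelArc1Reg (X : Type*) {W : Type*} [Group X] (M : X → W → W → Prop)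
    (H : SimpleGraph W) : Prop :=
  ∀ z₁ z₂ w₁ w₂ : W, H.Adj z₁ z₂ → H.Adj w₁ w₂ →
    ∃! x : X, M x z₁ w₁ ∧ M x z₂ w₂

/-- `X` is regular on the 2-arcs of `H`, the action being described by `M`. -/
def RelArc2Reg (X : Type*) {W : Type*} [Group X] (M : X → W → W → Prop)
    (H : SimpleGraph W) : Prop :=
  ∀ z₁ z₂ z₃ w₁ w₂ w₃ : W, H.Adj z₁ z₂ → H.Adj z₂ z₃ → z₁ ≠ z₃ →
    H.Adj w₁ w₂ → H.Adj w₂ w₃ → w₁ ≠ w₃ →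
    ∃! x : X, M x z₁ w₁ ∧ M x z₂ w₂ ∧ M x z₃ w₃

/-- The bipartite subgraph of a graph `H` induced by two disjoint sets `U`, `T` of
vertices, keeping only the edges between `U` and `T`. -/
def biSub {W : Type*} (H : SimpleGraph W) (U T : Set W) : SimpleGraph ↥(U ∪ T) :=
  SimpleGraph.fromRel (fun a b => H.Adj ↑a ↑b ∧ ((↑a ∈ U ∧ ↑b ∈ T) ∨ (↑a ∈ T ∧ ↑b ∈ U)))

/-- The perfect matching with three edges, `3K₂`. -/
def threeK2 : SimpleGraph (Fin 3 × Fin 2) := SimpleGraph.fromRel (fun p q => p.1 = q.1)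

/-- The complete bipartite graph `K_{3,3}`. -/
def K33 : SimpleGraph (Fin 3 ⊕ Fin 3) := completeBipartiteGraph (Fin 3) (Fin 3)

/-- `K_{3,3}` minus a perfect matching. -/
def K33m3K2 : SimpleGraph (Fin 3 ⊕ Fin 3) :=
  SimpleGraph.fromRel (fun a b => ∃ i j : Fin 3, i ≠ j ∧ a = Sum.inl i ∧ b = Sum.inr j)

/-- The neighbourhood `Γ(B) = ⋃_{u ∈ B} Γ(u)` of a set of vertices. -/
def nbhd {V : Type*} (Γ : SimpleGraph V) (B : Set V) : Set V :=
  ⋃ u ∈ B, Γ.neighborSet u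

/-- Two sets of vertices are adjacent if they are distinct and joined by an edge. -/
def QAdj {V : Type*} (Γ : SimpleGraph V) (B C : Set V) : Prop :=
  B ≠ C ∧ ∃ u ∈ B, ∃ w ∈ C, Γ.Adj u w

/-- The quotient graph of `Γ` with respect to a partition `P` of its vertex set. -/
def quotGraph {V : Type*} (Γ : SimpleGraph V) (P : Set (Set V)) : SimpleGraph ↥P :=
  SimpleGraph.fromRel (fun B C => ∃ u ∈ (B : Set V), ∃ w ∈ (C : Set V), Γ.Adj u w)

/-- `P` is an `X`-invariant partition of the vertex set. -/
def XInvariantPartition (X : Type*) {V : Type*} [Group X] [MulAction X V]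
    (P : Set (Set V)) : Prop :=
  Setoid.IsPartition P ∧ ∀ (x : X), ∀ B ∈ P, x • B ∈ P

/-- The partition `P` is nontrivial: `1 < |B| < |V|` for each block `B`. -/
def NontrivialBlocks {V : Type*} [Fintype V] (P : Set (Set V)) : Prop :=
  ∀ B ∈ P, 1 < B.ncard ∧ B.ncard < Fintype.card V

/-- `x ∈ X` maps the block `B` to the block `C`. -/
def BlockMaps (X : Type*) {V : Type*} [Group X] [MulAction X V] (P : Set (Set V))
    (x : X) (B C : ↥P) : Prop :=
  (C : Set V) = x • (B : Set V)

/-!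
All vertices of `Γ[B,C]` lie in one component of `Γ`; by arc-transitivity of `Γ_B` the same holds
for `Γ[A,A']` for every arc `(A,A')` of `Γ_B`. A vertex of `Γ(C) ∩ B ∩ Γ(D)` lies in both `Γ[B,C]`
and `Γ[B,D]`, so by 2-arc-transitivity any two bipartite graphs `Γ[A,C₁]`, `Γ[A,C₂]` at a common
block share a vertex. Walking along `Γ_B`, which is connected, all the `Γ[A,A']` fall into a single
component, and it contains every vertex since `X` is vertex-transitive.
-/

section Action

variable {V X : Type*} [Group X] [MulAction X V] {Γ : SimpleGraph V}

theorem AdjPres.adj_smul_iff (hΓ : AdjPres X Γ) (x : X) {u w : V} :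
    Γ.Adj (x • u) (x • w) ↔ Γ.Adj u w :=
  ⟨fun h => by simpa using hΓ x⁻¹ _ _ h, hΓ x u w⟩

theorem AdjPres.reachable_smul (hΓ : AdjPres X Γ) (x : X) {u w : V} (h : Γ.Reachable u w) :
    Γ.Reachable (x • u) (x • w) :=
  h.map ⟨(x • ·), fun h => hΓ x _ _ h⟩

theorem mem_nbhd_iff {S : Set V} {u : V} : u ∈ nbhd Γ S ↔ ∃ w ∈ S, Γ.Adj w u := by
  simp [nbhd, SimpleGraph.mem_neighborSet]

theorem AdjPres.nbhd_smul (hΓ : AdjPres X Γ) (x : X) (S : Set V) :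
    nbhd Γ (x • S) = x • nbhd Γ S := by
  ext u
  rw [Set.mem_smul_set_iff_inv_smul_mem, mem_nbhd_iff, mem_nbhd_iff]
  constructor
  · rintro ⟨_, ⟨w, hw, rfl⟩, hwu⟩
    exact ⟨w, hw, (hΓ.adj_smul_iff x).1 (by simpa using hwu)⟩
  · rintro ⟨w, hw, hwu⟩
    exact ⟨x • w, Set.smul_mem_smul_set hw, by simpa using hΓ x _ _ hwu⟩

/-- The vertex type of `biSub Γ (nbhd Γ C ∩ A) (nbhd Γ A ∩ C)`, i.e. of `Γ[A,C]`. -/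
def biSubVerts (Γ : SimpleGraph V) (A C : Set V) : Set V :=
  (nbhd Γ C ∩ A) ∪ (nbhd Γ A ∩ C)

theorem biSubVerts_comm (Γ : SimpleGraph V) (A C : Set V) :
    biSubVerts Γ A C = biSubVerts Γ C A :=
  Set.union_comm _ _

theorem AdjPres.biSubVerts_smul (hΓ : AdjPres X Γ) (x : X) (A C : Set V) :
    biSubVerts Γ (x • A) (x • C) = x • biSubVerts Γ A C := by
  simp only [biSubVerts, hΓ.nbhd_smul, ← Set.smul_set_inter, ← Set.smul_set_union]

end Action

theorem reachable_of_biSub_connected {V : Type*} {Γ : SimpleGraph V} {U T : Set V}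
    (h : (biSub Γ U T).Connected) {u w : V} (hu : u ∈ U ∪ T) (hw : w ∈ U ∪ T) :
    Γ.Reachable u w := by
  let f : biSub Γ U T →g Γ := ⟨Subtype.val, fun hab => by
    obtain ⟨-, ⟨hab, -⟩ | ⟨hba, -⟩⟩ := SimpleGraph.fromRel_adj _ _ _ |>.1 hab
    exacts [hab, hba.symm]⟩
  exact (h.preconnected ⟨u, hu⟩ ⟨w, hw⟩).map f

theorem reachable_of_reachable_at_common_tail {V W : Type*} {Γ : SimpleGraph V}
    {Q : SimpleGraph W} (hQ : Q.Preconnected) (S : W → W → Set V) (hS : ∀ A C, S A C = S C A)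
    (hne : ∀ A C, Q.Adj A C → (S A C).Nonempty)
    (htail : ∀ A C₁ C₂, Q.Adj A C₁ → Q.Adj A C₂ → ∀ u ∈ S A C₁, ∀ w ∈ S A C₂, Γ.Reachable u w)
    {A C A' C' : W} (hAC : Q.Adj A C) (hAC' : Q.Adj A' C') {u w : V} (hu : u ∈ S A C)
    (hw : w ∈ S A' C') : Γ.Reachable u w := by
  obtain ⟨p⟩ := hQ A A'
  induction p generalizing C u with
  | nil => exact htail _ _ _ hAC hAC' u hu w hw
  | @cons A A₁ _ hAA₁ _ ih =>
    obtain ⟨z, hz⟩ := hne A A₁ hAA₁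
    exact (htail _ _ _ hAC hAA₁ u hu z hz).trans (ih hAA₁.symm hAC' (by rwa [← hS]) hw)

section Quotient

variable {V X : Type*} [Group X] [MulAction X V] {Γ : SimpleGraph V} {P : Set (Set V)}

theorem biSubVerts_nonempty_of_quotGraph_adj {A C : P} (h : (quotGraph Γ P).Adj A C) :
    (biSubVerts Γ A C).Nonempty := by
  obtain ⟨-, ⟨u, hu, w, hw, huw⟩ | ⟨w, hw, u, hu, hwu⟩⟩ := SimpleGraph.fromRel_adj _ _ _ |>.1 h
  · exact ⟨u, Or.inl ⟨mem_nbhd_iff.2 ⟨w, hw, huw.symm⟩, hu⟩⟩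
  · exact ⟨u, Or.inl ⟨mem_nbhd_iff.2 ⟨w, hw, hwu⟩, hu⟩⟩

theorem reachable_of_mem_biSubVerts (hΓ : AdjPres X Γ)
    (hq : RelXSymm X (BlockMaps X P) (quotGraph Γ P)) {B C : P} (hBC : (quotGraph Γ P).Adj B C)
    (hbip : (biSub Γ (nbhd Γ C ∩ B) (nbhd Γ B ∩ C)).Connected) {A A' : P}
    (hAA' : (quotGraph Γ P).Adj A A') {u w : V} (hu : u ∈ biSubVerts Γ A A')
    (hw : w ∈ biSubVerts Γ A A') : Γ.Reachable u w := by
  obtain ⟨x, hxA, hxA'⟩ := hq.2.2 B C A A' hBC hAA'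
  rw [BlockMaps] at hxA hxA'
  rw [hxA, hxA', hΓ.biSubVerts_smul] at hu hw
  obtain ⟨u, hu, rfl⟩ := hu
  obtain ⟨w, hw, rfl⟩ := hw
  exact hΓ.reachable_smul x (reachable_of_biSub_connected hbip hu hw)

theorem exists_mem_biSubVerts_inter (hΓ : AdjPres X Γ)
    (hq2 : RelArc2Trans X (BlockMaps X P) (quotGraph Γ P)) {B C D : P}
    (hBC : (quotGraph Γ P).Adj B C) (hBD : (quotGraph Γ P).Adj B D) (hCD : C ≠ D) {v : V}
    (hv : v ∈ biSubVerts Γ B C ∩ biSubVerts Γ B D) {A C₁ C₂ : P}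
    (h₁ : (quotGraph Γ P).Adj A C₁) (h₂ : (quotGraph Γ P).Adj A C₂) (h₁₂ : C₁ ≠ C₂) :
    (biSubVerts Γ A C₁ ∩ biSubVerts Γ A C₂).Nonempty := by
  obtain ⟨x, hxC, hxB, hxD⟩ := hq2 C B D C₁ A C₂ hBC.symm hBD hCD h₁.symm h₂ h₁₂
  rw [BlockMaps] at hxC hxB hxD
  refine ⟨x • v, ?_, ?_⟩
  · rw [hxB, hxC, hΓ.biSubVerts_smul]
    exact Set.smul_mem_smul_set hv.1
  · rw [hxB, hxD, hΓ.biSubVerts_smul]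
    exact Set.smul_mem_smul_set hv.2

theorem reachable_of_mem_biSubVerts_of_adj_adj (hΓ : AdjPres X Γ)
    (hq : RelXSymm X (BlockMaps X P) (quotGraph Γ P))
    (hq2 : RelArc2Trans X (BlockMaps X P) (quotGraph Γ P)) {B C D : P}
    (hBC : (quotGraph Γ P).Adj B C) (hBD : (quotGraph Γ P).Adj B D) (hCD : C ≠ D)
    (hbip : (biSub Γ (nbhd Γ C ∩ B) (nbhd Γ B ∩ C)).Connected) {v : V}
    (hv : v ∈ biSubVerts Γ B C ∩ biSubVerts Γ B D) (A C₁ C₂ : P)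
    (h₁ : (quotGraph Γ P).Adj A C₁) (h₂ : (quotGraph Γ P).Adj A C₂) :
    ∀ u ∈ biSubVerts Γ A C₁, ∀ w ∈ biSubVerts Γ A C₂, Γ.Reachable u w := by
  intro u hu w hw
  obtain rfl | h₁₂ := eq_or_ne C₁ C₂
  · exact reachable_of_mem_biSubVerts hΓ hq hBC hbip h₁ hu hw
  obtain ⟨z, hz₁, hz₂⟩ := exists_mem_biSubVerts_inter hΓ hq2 hBC hBD hCD hv h₁ h₂ h₁₂
  exact (reachable_of_mem_biSubVerts hΓ hq hBC hbip h₁ hu hz₁).trans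
    (reachable_of_mem_biSubVerts hΓ hq hBC hbip h₂ hz₂ hw)

end Quotient

theorem connected_of_quotient_conditions_general {V X : Type*} [Group X] [MulAction X V]
    (Γ : SimpleGraph V) (hsym : XSymm X Γ)
    (P : Set (Set V)) (hP : XInvariantPartition X P)
    (hqconn : (quotGraph Γ P).Connected)
    (hqsym : RelXSymm X (BlockMaps X P) (quotGraph Γ P))
    (hq2at : RelArc2Trans X (BlockMaps X P) (quotGraph Γ P))
    (B C D : ↥P) (hBC : (quotGraph Γ P).Adj B C) (hBD : (quotGraph Γ P).Adj B D)
    (hCD : C ≠ D)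
    (hbip : (biSub Γ (nbhd Γ ↑C ∩ ↑B) (nbhd Γ ↑B ∩ ↑C)).Connected)
    (hne : (nbhd Γ ↑C ∩ ↑B ∩ nbhd Γ ↑D).Nonempty) :
    Γ.Connected := by
  obtain ⟨hΓ, hvert, -⟩ := hsym
  obtain ⟨v, ⟨hvC, hvB⟩, hvD⟩ := hne
  have hv : v ∈ biSubVerts Γ B C ∩ biSubVerts Γ B D := ⟨Or.inl ⟨hvC, hvB⟩, Or.inl ⟨hvD, hvB⟩⟩
  have htail := reachable_of_mem_biSubVerts_of_adj_adj hΓ hqsym hq2at hBC hBD hCD hbip hv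
  refine (SimpleGraph.connected_iff_exists_forall_reachable Γ).2 ⟨v, fun u => ?_⟩
  obtain ⟨x, rfl⟩ := hvert v u
  let xB : P := ⟨x • (B : Set V), hP.2 x B B.2⟩
  let xC : P := ⟨x • (C : Set V), hP.2 x C C.2⟩
  have hxv : x • v ∈ biSubVerts Γ xB xC :=
    hΓ.biSubVerts_smul x B C ▸ Set.smul_mem_smul_set hv.1
  exact reachable_of_reachable_at_common_tail hqconn.preconnected
    (fun A C : P => biSubVerts Γ A C) (fun A C => biSubVerts_comm Γ A C)
    (fun _ _ => biSubVerts_nonempty_of_quotGraph_adj) htail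
    hBC (hqsym.1 x B C xB xC hBC rfl rfl) hv.1 hxv

/-- Let `Γ` be an `X`-symmetric graph with an `X`-invariant partition `P`
such that the quotient graph is connected and `(X,2)`-arc-transitive.  If, for a block `B`
and two distinct neighbouring blocks `C`, `D`, the bipartite graph `Γ[B,C]` is connected
and `Γ(C) ∩ B ∩ Γ(D) ≠ ∅`, then `Γ` is connected. -/
theorem connected_of_quotient_conditions {V X : Type*} [Fintype V] [Group X] [MulAction X V]
    (Γ : SimpleGraph V) (hsym : XSymm X Γ)
    (P : Set (Set V)) (hP : XInvariantPartition X P)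
    (hqconn : (quotGraph Γ P).Connected)
    (hqsym : RelXSymm X (BlockMaps X P) (quotGraph Γ P))
    (hq2at : RelArc2Trans X (BlockMaps X P) (quotGraph Γ P))
    (B C D : ↥P) (hBC : (quotGraph Γ P).Adj B C) (hBD : (quotGraph Γ P).Adj B D)
    (hCD : C ≠ D)
    (hbip : (biSub Γ (nbhd Γ ↑C ∩ ↑B) (nbhd Γ ↑B ∩ ↑C)).Connected)
    (hne : (nbhd Γ ↑C ∩ ↑B ∩ nbhd Γ ↑D).Nonempty) :
    Γ.Connected :=
  connected_of_quotient_conditions_general Γ hsym P hP hqconn hqsym hq2at B C D hBC hBD hCD hbip hne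
end
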